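/- arXiv:math/0210452 — 7 statements merged into one kernel-verified Lean document; each statement's English description precedes it below -/
import Mathlib

section
/- If f(s) = c(s)/a(s) and g(s) = c(s)/b(s) are rational functions with real polynomial coefficients such that Re[f(jω)] > 0 and Re[g(jω)] > 0 for all real ω, then for every λ ∈ [0,1], Re[c(jω)/(λ a(jω) + (1-λ) b(jω))] > 0 for all real ω at which λ a(jω) + (1-λ) b(jω) ≠ 0. -/
open Polynomial Complex

/-- Evaluation of a real polynomial at the purely imaginary point `iω`. -/
noncomputable def evalI (p : Polynomial ℝ) (ω : ℝ) : ℂ :=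
  Polynomial.aeval ((ω : ℂ) * Complex.I) p

lemma re_div_eq (z w : ℂ) (hw : w ≠ 0) :
    (z / w).re = (z * (starRingEnd ℂ) w).re / Complex.normSq w := by
  have h : z / w = z * (starRingEnd ℂ) w / (Complex.normSq w : ℂ) := by
    have hwc : w * (starRingEnd ℂ) w ≠ 0 := by
      rw [Complex.mul_conj]; exact_mod_cast (Complex.normSq_pos.mpr hw).ne'
    rw [← Complex.mul_conj w, div_eq_div_iff hw hwc]; ring
  rw [h, Complex.div_ofReal_re]

lemma re_mul_conj_pos (z w : ℂ) (hw : w ≠ 0) (h : 0 < (z / w).re) :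
    0 < (z * (starRingEnd ℂ) w).re := by
  rw [re_div_eq _ _ hw] at h
  have hns : 0 < Complex.normSq w := Complex.normSq_pos.mpr hw
  have := mul_pos h hns
  rwa [div_mul_cancel₀ _ hns.ne'] at this

theorem spr_convex_combination (a b c : Polynomial ℝ)
    (ha : ∀ ω : ℝ, evalI a ω ≠ 0) (hb : ∀ ω : ℝ, evalI b ω ≠ 0)
    (hfa : ∀ ω : ℝ, 0 < (evalI c ω / evalI a ω).re)
    (hfb : ∀ ω : ℝ, 0 < (evalI c ω / evalI b ω).re) :
    ∀ lam : ℝ, lam ∈ Set.Icc (0 : ℝ) 1 → ∀ ω : ℝ,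
      (lam : ℂ) * evalI a ω + ((1 : ℂ) - lam) * evalI b ω ≠ 0 →
      0 < (evalI c ω / ((lam : ℂ) * evalI a ω + ((1 : ℂ) - lam) * evalI b ω)).re := by
  intro lam hlam ω hD
  obtain ⟨hl0, hl1⟩ := hlam
  set A := evalI a ω
  set B := evalI b ω
  set C := evalI c ω
  set D := (lam : ℂ) * A + ((1 : ℂ) - lam) * B with hDdef
  have hx : 0 < (C * (starRingEnd ℂ) A).re := re_mul_conj_pos _ _ (ha ω) (hfa ω)
  have hy : 0 < (C * (starRingEnd ℂ) B).re := re_mul_conj_pos _ _ (hb ω) (hfb ω)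
  rw [re_div_eq _ _ hD]
  have hconj : (starRingEnd ℂ) D =
      (lam : ℂ) * (starRingEnd ℂ) A + ((1 : ℂ) - lam) * (starRingEnd ℂ) B := by
    simp [hDdef, map_add, map_mul, map_sub, Complex.conj_ofReal]
  have hre : (C * (starRingEnd ℂ) D).re =
      lam * (C * (starRingEnd ℂ) A).re + (1 - lam) * (C * (starRingEnd ℂ) B).re := by
    rw [hconj]
    have : C * ((lam : ℂ) * (starRingEnd ℂ) A + ((1 : ℂ) - lam) * (starRingEnd ℂ) B) =
        (lam : ℂ) * (C * (starRingEnd ℂ) A) +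
        (((1 - lam : ℝ)) : ℂ) * (C * (starRingEnd ℂ) B) := by
      push_cast; ring
    rw [this]
    simp [Complex.add_re, Complex.re_ofReal_mul]
  rw [hre]
  have hnum : 0 < lam * (C * (starRingEnd ℂ) A).re + (1 - lam) * (C * (starRingEnd ℂ) B).re := by
    rcases eq_or_lt_of_le hl0 with h | h
    · rw [← h]; simpa using hy
    · nlinarith [mul_pos h hx, mul_nonneg (sub_nonneg.mpr hl1) hy.le]
  exact div_pos hnum (Complex.normSq_pos.mpr hD)
end

section
/- Suppose a(s) and b(s) are monic degree-n real polynomials, and c(s) is a real polynomial such that c(s)/a(s) and c(s)/b(s) are both strictly positive real. Then for every λ ∈ [0,1], the polynomial λ b(s) + (1-λ) a(s) is Hurwitz stable (all roots have negative real part). -/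
open Polynomial Complex

/-- All complex roots have strictly negative real part. -/
def HurwitzStable (p : Polynomial ℝ) : Prop :=
  ∀ z : ℂ, Polynomial.aeval z p = 0 → z.re < 0

/-- `p/q` is strictly positive real. -/
def SPR (p q : Polynomial ℝ) : Prop :=
  p.degree = q.degree ∧ HurwitzStable q ∧
    ∀ ω : ℝ, 0 < (evalI p ω / evalI q ω).re

/-!
If `λ b + (1 - λ) a` vanished at some `z` with `0 ≤ re z`, then, dividing by `c z`,
`λ · re (b z / c z) + (1 - λ) · re (a z / c z) = 0`. This is impossible once we know that
`re (c / a) > 0` on the whole closed right half-plane, not only on the imaginary axis. That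
follows from a minimum principle: `c / a` is holomorphic there (`a` is Hurwitz stable) and tends
to the positive real number `lc c / lc a` at infinity, so on a large half-disc the real part is
positive on the boundary, and the maximum modulus principle for `exp (-(c / a))` carries this
to the interior.
-/

open Filter Set Metric Bornology Topology

theorem Polynomial.eval_eq_eval_inv_reverse_mul_pow {K : Type*} [Field K] (p : K[X]) {x : K}
    (hx : x ≠ 0) : p.eval x = p.reverse.eval x⁻¹ * x ^ p.natDegree := by
  let := invertibleOfNonzero hx
  rw [← invOf_eq_inv, eval, eval, eval₂_reverse_mul_pow]

theorem Polynomial.tendsto_eval_div_eval_cobounded {𝕜 : Type*} [NormedField 𝕜] {p q : 𝕜[X]}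
    (hq : q ≠ 0) (hpq : p.natDegree = q.natDegree) :
    Tendsto (fun x => p.eval x / q.eval x) (cobounded 𝕜)
      (𝓝 (p.leadingCoeff / q.leadingCoeff)) := by
  have hrev : ContinuousAt (fun w => p.reverse.eval w / q.reverse.eval w) 0 :=
    p.reverse.continuousAt.div q.reverse.continuousAt
      (by rwa [← coeff_zero_eq_eval_zero, coeff_zero_reverse, leadingCoeff_ne_zero])
  have hlim := hrev.tendsto.comp tendsto_inv₀_cobounded
  rw [Function.comp_def, ← coeff_zero_eq_eval_zero, ← coeff_zero_eq_eval_zero,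
    coeff_zero_reverse, coeff_zero_reverse] at hlim
  refine hlim.congr' ?_
  filter_upwards [eventually_ne_cobounded 0] with x hx
  rw [eval_eq_eval_inv_reverse_mul_pow p hx, eval_eq_eval_inv_reverse_mul_pow q hx, hpq,
    mul_div_mul_right _ _ (pow_ne_zero _ hx)]

theorem Complex.eq_im_mul_I_of_re_eq_zero {z : ℂ} (hz : z.re = 0) : z = z.im * I := by
  simpa [hz] using (re_add_im z).symm

theorem Complex.re_pos_of_forall_mem_frontier_re_pos {F : ℂ → ℂ} {U : Set ℂ} (hU : IsBounded U)
    (hF : DiffContOnCl ℂ F U) (hfr : ∀ w ∈ frontier U, 0 < (F w).re) {z : ℂ}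
    (hz : z ∈ closure U) : 0 < (F z).re := by
  obtain ⟨m, hm, hmF⟩ := (hU.isCompact_closure.of_isClosed_subset isClosed_frontier
    frontier_subset_closure).exists_forall_le'
      (continuous_re.comp_continuousOn (hF.continuousOn.mono frontier_subset_closure)) hfr
  -- maximum modulus principle for `exp (-F)`, whose modulus is `exp (-re F)`
  have hexp : ‖exp (-F z)‖ ≤ Real.exp (-m) :=
    norm_le_of_forall_mem_frontier_norm_le hU (differentiable_exp.comp_diffContOnCl hF.neg)
      (fun w hw => by simpa [norm_exp] using hmF w hw) hz
  rw [norm_exp, neg_re, Real.exp_le_exp] at hexp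
  linarith

theorem Complex.re_pos_of_re_pos_on_imaginary_axis {F : ℂ → ℂ} {L : ℂ}
    (hF : DifferentiableOn ℂ F {z | 0 ≤ z.re}) (hL : Tendsto F (cobounded ℂ) (𝓝 L))
    (hLre : 0 < L.re) (haxis : ∀ y : ℝ, 0 < (F (y * I)).re) {z : ℂ} (hz : 0 ≤ z.re) :
    0 < (F z).re := by
  rcases hz.eq_or_lt with hz | hz
  · rw [eq_im_mul_I_of_re_eq_zero hz.symm]
    exact haxis _
  obtain ⟨r, hr⟩ : ∃ r, ∀ w : ℂ, r < ‖w‖ → 0 < (F w).re := by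
    have := ((continuous_re.tendsto L).comp hL).eventually (lt_mem_nhds hLre)
    simpa [(hasBasis_cobounded_compl_closedBall (0 : ℂ)).eventually_iff] using this
  set R := max r ‖z‖ + 1
  set U : Set ℂ := {w | 0 < w.re} ∩ ball 0 R
  have hUopen : IsOpen U := (isOpen_lt continuous_const continuous_re).inter isOpen_ball
  have hclosure : closure U ⊆ {w | 0 ≤ w.re} ∩ closedBall 0 R :=
    closure_minimal
      (inter_subset_inter (ofPred_subset_ofPred.2 fun _ => le_of_lt) ball_subset_closedBall)
      ((isClosed_le continuous_const continuous_re).inter isClosed_closedBall)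
  have hUF : DiffContOnCl ℂ F U :=
    ⟨hF.mono (subset_closure.trans (hclosure.trans inter_subset_left)),
      hF.continuousOn.mono (hclosure.trans inter_subset_left)⟩
  refine re_pos_of_forall_mem_frontier_re_pos (isBounded_ball.subset inter_subset_right) hUF
    (fun w hw => ?_) (subset_closure ⟨hz, by simp [R]; linarith [le_max_right r ‖z‖]⟩)
  obtain ⟨hw0 : 0 ≤ w.re, -⟩ := hclosure (frontier_subset_closure hw)
  rcases hw0.eq_or_lt with hw0 | hw0
  · rw [eq_im_mul_I_of_re_eq_zero hw0.symm]
    exact haxis _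
  · have : w ∉ ball 0 R := fun hwb => (hUopen.frontier_eq ▸ hw).2 ⟨hw0, hwb⟩
    simp only [mem_ball, dist_zero_right, not_lt] at this
    exact hr w (by linarith [le_max_left r ‖z‖])

theorem Complex.re_inv_pos_of_re_pos {w : ℂ} (hw : 0 < w.re) : 0 < w⁻¹.re := by
  rw [inv_re]
  exact div_pos hw (normSq_pos.2 fun h => hw.ne' (by simp [h]))

theorem HurwitzStable.ne_zero {p : ℝ[X]} (hp : HurwitzStable p) : p ≠ 0 := by
  rintro rfl
  exact absurd (hp 1 (by simp)) (by norm_num)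

theorem HurwitzStable.aeval_ne_zero {p : ℝ[X]} (hp : HurwitzStable p) {z : ℂ} (hz : 0 ≤ z.re) :
    aeval z p ≠ 0 :=
  fun h => (hp z h).not_ge hz

theorem SPR.tendsto_cobounded {c a : ℝ[X]} (h : SPR c a) :
    Tendsto (fun z => aeval z c / aeval z a) (cobounded ℂ)
      (𝓝 ((c.leadingCoeff / a.leadingCoeff : ℝ) : ℂ)) := by
  have hmap := tendsto_eval_div_eval_cobounded (p := c.map (algebraMap ℝ ℂ))
    (q := a.map (algebraMap ℝ ℂ)) (map_ne_zero h.2.1.ne_zero)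
    (by simpa using natDegree_eq_of_degree_eq h.1)
  simpa only [eval_map_algebraMap, leadingCoeff_map, coe_algebraMap, ofReal_div] using hmap

theorem SPR.leadingCoeff_div_pos {c a : ℝ[X]} (h : SPR c a) :
    0 < c.leadingCoeff / a.leadingCoeff := by
  have hc : c ≠ 0 := fun hc => h.2.1.ne_zero (degree_eq_bot.1 (by rw [← h.1, hc, degree_zero]))
  have hne : c.leadingCoeff / a.leadingCoeff ≠ 0 :=
    div_ne_zero (leadingCoeff_ne_zero.2 hc) (leadingCoeff_ne_zero.2 h.2.1.ne_zero)
  refine lt_of_le_of_ne ?_ hne.symm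
  have haxis : Tendsto (fun ω : ℝ => (ω : ℂ) * I) atTop (cobounded ℂ) :=
    tendsto_norm_atTop_iff_cobounded.mp (by simpa using tendsto_abs_atTop_atTop)
  have hre : Tendsto (fun ω : ℝ => (aeval ((ω : ℂ) * I) c / aeval ((ω : ℂ) * I) a).re) atTop
      (𝓝 (c.leadingCoeff / a.leadingCoeff)) :=
    (continuous_re.tendsto _).comp (h.tendsto_cobounded.comp haxis)
  exact ge_of_tendsto hre (.of_forall fun ω => (h.2.2 ω).le)

theorem SPR.re_div_pos {c a : ℝ[X]} (h : SPR c a) {z : ℂ} (hz : 0 ≤ z.re) :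
    0 < (aeval z c / aeval z a).re :=
  re_pos_of_re_pos_on_imaginary_axis
    (c.differentiable_aeval.differentiableOn.div a.differentiable_aeval.differentiableOn
      fun _ hw => h.2.1.aeval_ne_zero hw)
    h.tendsto_cobounded (by simpa using h.leadingCoeff_div_pos) h.2.2 hz

theorem segment_stability_necessary_general (a b c : Polynomial ℝ)
    (hca : SPR c a) (hcb : SPR c b) :
    ∀ lam : ℝ, lam ∈ Set.Icc (0 : ℝ) 1 →
      HurwitzStable (Polynomial.C lam * b + Polynomial.C (1 - lam) * a) := by
  intro lam ⟨hlam0, hlam1⟩ z hz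
  by_contra! hre
  have ha : 0 < (aeval z a / aeval z c).re := by
    simpa only [inv_div] using re_inv_pos_of_re_pos (hca.re_div_pos hre)
  have hb : 0 < (aeval z b / aeval z c).re := by
    simpa only [inv_div] using re_inv_pos_of_re_pos (hcb.re_div_pos hre)
  have hcomb : aeval z (Polynomial.C lam * b + Polynomial.C (1 - lam) * a) / aeval z c =
      lam * (aeval z b / aeval z c) + (1 - lam) * (aeval z a / aeval z c) := by
    simp [add_div, mul_div_assoc]
  rw [hz, zero_div] at hcomb
  have hre_comb := congrArg re hcomb
  simp only [zero_re, add_re, re_ofReal_mul, ← ofReal_one, ← ofReal_sub] at hre_comb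
  rcases hlam0.eq_or_lt with rfl | hlam0
  · linarith
  · nlinarith [mul_pos hlam0 hb, mul_nonneg (sub_nonneg.2 hlam1) ha.le]

theorem segment_stability_necessary (n : ℕ) (a b c : Polynomial ℝ)
    (hamon : a.Monic) (hadeg : a.natDegree = n)
    (hbmon : b.Monic) (hbdeg : b.natDegree = n)
    (hca : SPR c a) (hcb : SPR c b) :
    ∀ lam : ℝ, lam ∈ Set.Icc (0 : ℝ) 1 →
      HurwitzStable (Polynomial.C lam * b + Polynomial.C (1 - lam) * a) :=
  segment_stability_necessary_general a b c hca hcb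
end

section
/- Let a(s) = s² + a₁ s + a₂ and b(s) = s² + b₁ s + b₂ be Hurwitz stable monic real quadratic polynomials. Then there exists a real polynomial c(s) of degree 2 such that c(s)/a(s) and c(s)/b(s) are both strictly positive real. -/
open Polynomial Complex

/-!
A monic quadratic `s² + a₁ s + a₂` has the root `(-a₁ + w) / 2`, where `w² = a₁² - 4 a₂` and
`0 ≤ Re w`; Hurwitz stability forces `Re w < a₁`, and `(Re w)² ≥ Re (w²)` then gives `a₁ > 0`
and `a₂ > 0`. For a second monic quadratic `c = s² + c₁ s + c₂`,
`Re (c(iω) · conj a(iω)) = ω⁴ + (c₁ a₁ - a₂ - c₂) ω² + a₂ c₂`, which is positive for all `ω`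
once `c₂ > 0` and `c₁ a₁ ≥ a₂ + c₂`. Taking `c₂ = 1` and `c₁` large serves both `a` and `b`.
-/

lemma aeval_quadratic (t u : ℝ) (z : ℂ) :
    aeval z (X ^ 2 + C t * X + C u : ℝ[X]) = z ^ 2 + t * z + u := by
  simp

lemma degree_quadratic (t u : ℝ) : (X ^ 2 + C t * X + C u : ℝ[X]).degree = 2 := by
  compute_degree!

lemma evalI_quadratic_re (t u ω : ℝ) : (evalI (X ^ 2 + C t * X + C u) ω).re = u - ω ^ 2 := by
  simp [evalI, pow_two]
  ring

lemma evalI_quadratic_im (t u ω : ℝ) : (evalI (X ^ 2 + C t * X + C u) ω).im = t * ω := by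
  simp [evalI, pow_two]

lemma HurwitzStable.evalI_ne_zero {p : ℝ[X]} (hp : HurwitzStable p) (ω : ℝ) : evalI p ω ≠ 0 :=
  fun h => by simpa using hp _ h

lemma HurwitzStable.quadratic_coeffs_pos {a₁ a₂ : ℝ}
    (h : HurwitzStable (X ^ 2 + C a₁ * X + C a₂)) : 0 < a₁ ∧ 0 < a₂ := by
  obtain ⟨w, hw, hw_re⟩ : ∃ w : ℂ, w ^ 2 = a₁ ^ 2 - 4 * a₂ ∧ 0 ≤ w.re := by
    obtain ⟨w, hw⟩ := IsAlgClosed.exists_pow_nat_eq ((a₁ : ℂ) ^ 2 - 4 * a₂) two_pos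
    rcases le_total 0 w.re with hre | hre
    · exact ⟨w, hw, hre⟩
    · exact ⟨-w, by rw [neg_sq, hw], by simpa using hre⟩
  have hroot_re : ((-a₁ + w) / 2).re < 0 :=
    h _ (by rw [aeval_quadratic]; linear_combination hw / 4)
  have hw_sq_re : w.re * w.re - w.im * w.im = a₁ ^ 2 - 4 * a₂ := by
    simpa [pow_two] using congrArg re hw
  have hw_lt : w.re < a₁ := by
    simp only [div_ofNat_re, add_re, neg_re, ofReal_re] at hroot_re
    linarith
  constructor <;> nlinarith [sq_nonneg w.im]

lemma spr_quadratic {a₁ a₂ c₁ c₂ : ℝ} (hA : HurwitzStable (X ^ 2 + C a₁ * X + C a₂))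
    (hc₂ : 0 < c₂) (hc₁ : (a₂ + c₂) / a₁ ≤ c₁) :
    SPR (X ^ 2 + C c₁ * X + C c₂) (X ^ 2 + C a₁ * X + C a₂) := by
  obtain ⟨ha₁, ha₂⟩ := hA.quadratic_coeffs_pos
  rw [div_le_iff₀ ha₁] at hc₁
  refine ⟨by rw [degree_quadratic, degree_quadratic], hA, fun ω => ?_⟩
  rw [Complex.div_re, ← add_div]
  refine div_pos ?_ (normSq_pos.mpr (hA.evalI_ne_zero ω))
  simp only [evalI_quadratic_re, evalI_quadratic_im]
  nlinarith [pow_nonneg (sq_nonneg ω) 2, mul_pos ha₂ hc₂,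
    mul_nonneg (sub_nonneg.2 hc₁) (sq_nonneg ω)]

theorem spr_synthesis_deg_two (a₁ a₂ b₁ b₂ : ℝ)
    (hA : HurwitzStable (Polynomial.X ^ 2 + Polynomial.C a₁ * Polynomial.X + Polynomial.C a₂))
    (hB : HurwitzStable (Polynomial.X ^ 2 + Polynomial.C b₁ * Polynomial.X + Polynomial.C b₂)) :
    ∃ c : Polynomial ℝ, c.degree = 2 ∧
      SPR c (Polynomial.X ^ 2 + Polynomial.C a₁ * Polynomial.X + Polynomial.C a₂) ∧
      SPR c (Polynomial.X ^ 2 + Polynomial.C b₁ * Polynomial.X + Polynomial.C b₂) := by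
  let c₁ := max ((a₂ + 1) / a₁) ((b₂ + 1) / b₁)
  exact ⟨X ^ 2 + C c₁ * X + C 1, degree_quadratic _ _,
    spr_quadratic hA one_pos (le_max_left _ _), spr_quadratic hB one_pos (le_max_right _ _)⟩
end

section
/- Let f(s) = p(s)/q(s) be a rational function with real polynomial coefficients where deg p ≤ deg q = n, q is Hurwitz stable, and Re[f(jω)] > 0 for all real ω. Then p is Hurwitz stable and deg p ∈ {n-1, n}. -/
open Polynomial Complex

/-! Since `deg p ≤ deg q` and `q` has no zeros in the closed right half-plane, `f = p / q` is
bounded there, so Phragmén–Lindelöf applied to `exp (-f)` carries `Re f > 0` from the imaginary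
axis to the closed half-plane (strictly, by the maximum modulus principle); in particular `p` has
no zeros there. If `k = deg q - deg p ≥ 2`, then `z ^ k * f z` tends to the nonzero real number
`lc p / lc q` at infinity, but `Re f ≥ 0` along the rays of angles `0` and `π / k` forces this
limit to be both `≥ 0` and `≤ 0`. -/

open Filter Topology Bornology

namespace Polynomial

variable {K A : Type*} [Field K] [NormedField A] [Algebra K A]

theorem aeval_div_aeval_eq_reflect {P Q : K[X]} {N : ℕ} (hP : P.natDegree ≤ N)
    (hQ : Q.natDegree ≤ N) {z : A} (hz : z ≠ 0) :
    aeval z P / aeval z Q = aeval z⁻¹ (P.reflect N) / aeval z⁻¹ (Q.reflect N) := by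
  have : Invertible z := invertibleOfNonzero hz
  simp only [aeval_def, ← eval₂_reflect_mul_pow _ z N _ hP,
    ← eval₂_reflect_mul_pow _ z N _ hQ, invOf_eq_inv]
  rw [mul_div_mul_right _ _ (pow_ne_zero _ hz)]

theorem tendsto_aeval_div_aeval_cobounded {P Q : K[X]} (hQ : Q ≠ 0)
    (hPQ : P.natDegree ≤ Q.natDegree) :
    Tendsto (fun z : A => aeval z P / aeval z Q) (cobounded A)
      (𝓝 (algebraMap K A (P.coeff Q.natDegree / Q.leadingCoeff))) := by
  have hlim (R : K[X]) : Tendsto (fun z : A => aeval z⁻¹ (R.reflect Q.natDegree))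
      (cobounded A) (𝓝 (algebraMap K A (R.coeff Q.natDegree))) := by
    have := ((R.reflect Q.natDegree).continuous_aeval (A := A)).tendsto 0
    simpa [← coeff_zero_eq_aeval_zero', coeff_reflect, Function.comp_def] using
      this.comp tendsto_inv₀_cobounded
  rw [map_div₀]
  refine ((hlim P).div (hlim Q) (by simpa using hQ)).congr' ?_
  filter_upwards [eventually_ne_cobounded 0] with z hz
  exact (aeval_div_aeval_eq_reflect hPQ le_rfl hz).symm

end Polynomial

theorem exists_norm_le_of_tendsto_cobounded {E F : Type*} [NormedAddCommGroup E] [ProperSpace E]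
    [NormedAddCommGroup F] {f : E → F} {s : Set E} (hs : IsClosed s) (hf : ContinuousOn f s)
    {L : F} (hL : Tendsto f (cobounded E) (𝓝 L)) : ∃ M, ∀ z ∈ s, ‖f z‖ ≤ M := by
  obtain ⟨r, -, hr⟩ := (Metric.hasBasis_cobounded_compl_closedBall 0).eventually_iff.1
    (hL.norm.eventually (gt_mem_nhds (lt_add_one ‖L‖)))
  obtain ⟨M, hM⟩ := ((isCompact_closedBall 0 r).inter_right hs).exists_bound_of_continuousOn
    (hf.mono Set.inter_subset_right)
  refine ⟨max M (‖L‖ + 1), fun z hz => ?_⟩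
  by_cases hzr : z ∈ Metric.closedBall 0 r
  · exact (hM z ⟨hzr, hz⟩).trans (le_max_left _ _)
  · exact (hr hzr).le.trans (le_max_right _ _)

namespace Complex

variable {f : ℂ → ℂ}

theorem norm_exp_neg (z : ℂ) : ‖exp (-z)‖ = Real.exp (-z.re) := by
  simp [norm_exp]

theorem DiffContOnCl.cexp_neg {s : Set ℂ} (hd : DiffContOnCl ℂ f s) :
    DiffContOnCl ℂ (fun z => exp (-f z)) s :=
  differentiable_exp.comp_diffContOnCl hd.neg

theorem re_nonneg_of_re_nonneg_on_imaginaryAxis (hd : DiffContOnCl ℂ f {z | 0 < z.re})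
    {M : ℝ} (hM : ∀ z : ℂ, 0 ≤ z.re → -M ≤ (f z).re)
    (him : ∀ ω : ℝ, 0 ≤ (f (ω * I)).re) {z : ℂ} (hz : 0 ≤ z.re) : 0 ≤ (f z).re := by
  have hbdd (w : ℂ) (hw : 0 ≤ w.re) : ‖exp (-f w)‖ ≤ Real.exp M := by
    rw [norm_exp_neg]
    exact Real.exp_le_exp.2 (by linarith [hM w hw])
  have hle : ‖exp (-f z)‖ ≤ 1 := by
    refine PhragmenLindelof.right_half_plane_of_bounded_on_real (f := fun w => exp (-f w))
      hd.cexp_neg ⟨1, one_lt_two, 0, ?_⟩ ?_ (fun ω => ?_) hz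
    · refine Asymptotics.IsBigO.of_bound (Real.exp M) ?_
      filter_upwards [mem_inf_of_right (Filter.mem_principal_self _)] with w hw
      simpa using hbdd w (le_of_lt hw)
    · exact isBoundedUnder_of_eventually_le (a := Real.exp M) <|
        (eventually_ge_atTop 0).mono fun x hx => hbdd x (by simpa using hx)
    · rw [norm_exp_neg, Real.exp_le_one_iff]
      linarith [him ω]
  rwa [norm_exp_neg, Real.exp_le_one_iff, neg_nonpos] at hle

theorem re_pos_of_re_pos_on_imaginaryAxis (hd : DiffContOnCl ℂ f {z | 0 < z.re})
    {M : ℝ} (hM : ∀ z : ℂ, 0 ≤ z.re → -M ≤ (f z).re)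
    (him : ∀ ω : ℝ, 0 < (f (ω * I)).re) {z : ℂ} (hz : 0 ≤ z.re) : 0 < (f z).re := by
  have hnonneg (w : ℂ) (hw : 0 ≤ w.re) : 0 ≤ (f w).re :=
    re_nonneg_of_re_nonneg_on_imaginaryAxis hd hM (fun ω => (him ω).le) hw
  rcases hz.lt_or_eq with hz | hz
  · refine (hnonneg z hz.le).lt_of_ne fun hzero => ?_
    -- `‖exp (-f)‖ ≤ 1` would attain its maximum at the interior point `z`.
    have hmax : IsMaxOn (norm ∘ fun w => exp (-f w)) {w | 0 < w.re} z := fun w hw => by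
      simp only [Set.mem_ofPred_eq, Function.comp_apply, norm_exp_neg, ← hzero]
      exact Real.exp_le_exp.2 (by linarith [hnonneg w (le_of_lt hw)])
    have hconst := eqOn_closure_of_isPreconnected_of_isMaxOn_norm
      (convex_halfSpace_re_gt 0).isPreconnected (isOpen_lt continuous_const continuous_re)
      hd.cexp_neg hz hmax (show (0 : ℂ) ∈ closure {w : ℂ | 0 < w.re} by simp)
    have := congrArg norm hconst
    simp only [Function.const_apply, norm_exp_neg, ← hzero, neg_zero, Real.exp_eq_exp,
      neg_eq_zero] at this
    simpa [this] using him 0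
  · have hzI : z = z.im * I := Complex.ext (by simp [← hz]) (by simp)
    simpa [← hzI] using him z.im

theorem re_div_pow_nonneg_of_tendsto (hf : ∀ z : ℂ, 0 ≤ z.re → 0 ≤ (f z).re) {k : ℕ}
    {c u : ℂ} (h : Tendsto (fun z => z ^ k * f z) (cobounded ℂ) (𝓝 c)) (hu0 : u ≠ 0)
    (hu : 0 ≤ u.re) : 0 ≤ (c / u ^ k).re := by
  have hray : Tendsto (fun R : ℝ => (R : ℂ) * u) atTop (cobounded ℂ) :=
    (tendsto_mul_right_cobounded hu0).comp (RCLike.tendsto_ofReal_atTop_cobounded ℂ)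
  refine ge_of_tendsto ((continuous_re.tendsto _).comp ((h.comp hray).div_const (u ^ k))) ?_
  filter_upwards [eventually_ge_atTop 0] with R hR
  have hRu : ((R : ℂ) * u) ^ k * f (R * u) / u ^ k = ((R ^ k : ℝ) : ℂ) * f (R * u) := by
    push_cast
    field_simp
    ring
  simp only [Function.comp_apply, hRu, re_ofReal_mul]
  exact mul_nonneg (pow_nonneg hR k) (hf _ (by simpa using mul_nonneg hR hu))

theorem eq_zero_of_tendsto_pow_mul_cobounded (hf : ∀ z : ℂ, 0 ≤ z.re → 0 ≤ (f z).re)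
    {k : ℕ} (hk : 2 ≤ k) {c : ℝ}
    (h : Tendsto (fun z => z ^ k * f z) (cobounded ℂ) (𝓝 c)) : c = 0 := by
  have hc_nonneg : 0 ≤ c := by simpa using re_div_pow_nonneg_of_tendsto hf h one_ne_zero
  -- along the ray of angle `π / k`, which lies in the closed right half-plane, `z ^ k` is negative
  set u := exp ((Real.pi / k : ℝ) * I)
  have hu : u ^ k = -1 := by
    rw [← exp_nat_mul, ← exp_pi_mul_I]
    congr 1
    have : (k : ℂ) ≠ 0 := by exact_mod_cast (by omega : k ≠ 0)
    push_cast
    field_simp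
  have hu_re : 0 ≤ u.re := by
    rw [exp_ofReal_mul_I_re]
    have hπk_le : Real.pi / k ≤ Real.pi / 2 :=
      div_le_div_of_nonneg_left Real.pi_pos.le two_pos (by exact_mod_cast hk)
    have hπk_nonneg : 0 ≤ Real.pi / k := by positivity
    exact Real.cos_nonneg_of_mem_Icc ⟨by linarith [Real.pi_pos], hπk_le⟩
  have := re_div_pow_nonneg_of_tendsto hf h (exp_ne_zero _) hu_re
  rw [hu, div_neg, div_one, neg_re, ofReal_re] at this
  linarith

end Complex

theorem ne_zero_of_re_evalI_div_pos {p q : ℝ[X]} {ω : ℝ}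
    (h : 0 < (evalI p ω / evalI q ω).re) : p ≠ 0 ∧ q ≠ 0 := by
  constructor <;> rintro rfl <;> simp [evalI] at h

theorem re_aeval_div_aeval_pos {p q : ℝ[X]} (hq : HurwitzStable q)
    (hdeg : p.natDegree ≤ q.natDegree) (hpos : ∀ ω : ℝ, 0 < (evalI p ω / evalI q ω).re)
    {z : ℂ} (hz : 0 ≤ z.re) : 0 < (aeval z p / aeval z q).re := by
  have hq_ne (z : ℂ) (hz : 0 ≤ z.re) : aeval z q ≠ 0 := fun h => (hq z h).not_ge hz
  have hf : DiffContOnCl ℂ (fun z => aeval z p / aeval z q) {z : ℂ | 0 < z.re} := by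
    refine DifferentiableOn.diffContOnCl ?_
    rw [closure_setOfPred_lt_re]
    exact (Polynomial.differentiable_aeval p).differentiableOn.div
      (Polynomial.differentiable_aeval q).differentiableOn hq_ne
  obtain ⟨M, hM⟩ := exists_norm_le_of_tendsto_cobounded
    (isClosed_le continuous_const continuous_re) (by simpa using hf.continuousOn)
    (tendsto_aeval_div_aeval_cobounded (ne_zero_of_re_evalI_div_pos (hpos 0)).2 hdeg)
  exact re_pos_of_re_pos_on_imaginaryAxis hf
    (fun w hw => neg_le_of_abs_le ((abs_re_le_norm _).trans (hM w hw))) hpos hz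

theorem natDegree_lt_add_two_of_re_aeval_div_aeval_nonneg {p q : ℝ[X]} (hp : p ≠ 0)
    (hq : q ≠ 0) (hdeg : p.natDegree ≤ q.natDegree)
    (hre : ∀ z : ℂ, 0 ≤ z.re → 0 ≤ (aeval z p / aeval z q).re) :
    q.natDegree < p.natDegree + 2 := by
  by_contra! hk
  have hlim : Tendsto (fun z => z ^ (q.natDegree - p.natDegree) * (aeval z p / aeval z q))
      (cobounded ℂ) (𝓝 ((p.leadingCoeff / q.leadingCoeff : ℝ) : ℂ)) := by
    have := tendsto_aeval_div_aeval_cobounded (A := ℂ)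
      (P := X ^ (q.natDegree - p.natDegree) * p) hq
      (natDegree_mul_le.trans (by simp [hdeg]))
    simpa [mul_div_assoc, coeff_X_pow_mul', hdeg, Nat.sub_sub_self] using this
  exact div_ne_zero (leadingCoeff_ne_zero.2 hp) (leadingCoeff_ne_zero.2 hq)
    (eq_zero_of_tendsto_pow_mul_cobounded hre (by omega) hlim)

theorem spr_numerator_stable_general (n : ℕ) (p q : Polynomial ℝ)
    (hq : HurwitzStable q) (hqdeg : q.natDegree = n)
    (hdeg : p.degree ≤ q.degree)
    (hpos : ∀ ω : ℝ, 0 < (evalI p ω / evalI q ω).re) :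
    HurwitzStable p ∧ (p.natDegree = n - 1 ∨ p.natDegree = n) := by
  obtain ⟨hp0, hq0⟩ := ne_zero_of_re_evalI_div_pos (hpos 0)
  have hm : p.natDegree ≤ q.natDegree := natDegree_le_natDegree hdeg
  have hre (z : ℂ) (hz : 0 ≤ z.re) := re_aeval_div_aeval_pos hq hm hpos hz
  refine ⟨fun z hz => not_le.1 fun hz' => by simpa [hz] using hre z hz', ?_⟩
  have := natDegree_lt_add_two_of_re_aeval_div_aeval_nonneg hp0 hq0 hm
    fun z hz => (hre z hz).le
  omega

theorem spr_numerator_stable (n : ℕ) (p q : Polynomial ℝ)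
    (hq : HurwitzStable q) (hqdeg : q.natDegree = n)
    (hp0 : p ≠ 0) (hdeg : p.degree ≤ q.degree)
    (hpos : ∀ ω : ℝ, 0 < (evalI p ω / evalI q ω).re) :
    HurwitzStable p ∧ (p.natDegree = n - 1 ∨ p.natDegree = n) :=
  spr_numerator_stable_general n p q hq hqdeg hdeg hpos
end

section
/- Let a(s) = s³ + a₁ s² + a₂ s + a₃ be a Hurwitz stable monic real cubic (equivalently a₁ > 0, a₂ > 0, a₃ > 0, and a₁ a₂ > a₃). Then there exist x₁ > 0, x₂ > 0 satisfying the strict inequality (a₂ x₁ - a₁ x₂ - a₃)² - 4(a₁ - x₁)(a₃ x₂) < 0; in particular, for any such (x₁, x₂) we have x₁ < a₁. -/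
theorem ellipse_interior_nonempty (a₁ a₂ a₃ : ℝ)
    (h1 : 0 < a₁) (h2 : 0 < a₂) (h3 : 0 < a₃) (h4 : a₃ < a₁ * a₂) :
    (∃ x₁ x₂ : ℝ, 0 < x₁ ∧ 0 < x₂ ∧
        (a₂ * x₁ - a₁ * x₂ - a₃) ^ 2 - 4 * (a₁ - x₁) * (a₃ * x₂) < 0) ∧
      ∀ x₁ x₂ : ℝ,
        (a₂ * x₁ - a₁ * x₂ - a₃) ^ 2 - 4 * (a₁ - x₁) * (a₃ * x₂) < 0 →
          x₁ < a₁ ∧ 0 < x₂ := by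
  constructor
  · refine ⟨(a₃ / a₂ + a₁) / 2, (a₁ * a₂ - a₃) / (2 * a₁), ?_, ?_, ?_⟩
    · positivity
    · have : 0 < a₁ * a₂ - a₃ := by linarith
      positivity
    · have key : a₂ * ((a₃ / a₂ + a₁) / 2) - a₁ * ((a₁ * a₂ - a₃) / (2 * a₁)) - a₃ = 0 := by
        field_simp
        ring
      rw [key]
      have hx : 0 < a₁ - (a₃ / a₂ + a₁) / 2 := by
        rw [sub_pos]
        have : a₃ / a₂ < a₁ := (div_lt_iff₀ h2).mpr (by linarith [mul_comm a₁ a₂])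
        linarith
      have hy : 0 < a₃ * ((a₁ * a₂ - a₃) / (2 * a₁)) := by
        have : 0 < a₁ * a₂ - a₃ := by linarith
        positivity
      nlinarith [mul_pos hx hy]
  · intro x₁ x₂ h
    have hard : ∀ y₁ y₂ : ℝ, a₁ ≤ y₁ → y₂ ≤ 0 →
        ¬ ((a₂ * y₁ - a₁ * y₂ - a₃) ^ 2 - 4 * (a₁ - y₁) * (a₃ * y₂) < 0) := by
      intro y₁ y₂ hu hv hlt
      have hu' : 0 ≤ y₁ - a₁ := by linarith
      have hv' : 0 ≤ -y₂ := by linarith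
      nlinarith [sq_nonneg (a₂ * (y₁ - a₁) + a₁ * y₂),
        mul_nonneg hu' hv',
        mul_nonneg hu' (sub_pos.mpr h4).le,
        mul_nonneg hv' (sub_pos.mpr h4).le,
        mul_pos h1 h2, sq_nonneg (a₁ * a₂ - a₃)]
    constructor
    · by_contra hc
      push_neg at hc
      rcases le_or_gt x₂ 0 with hx2 | hx2
      · exact hard x₁ x₂ hc hx2 h
      · have hne : a₁ - x₁ ≠ 0 := by
          intro he
          have h0 : (4:ℝ) * (a₁ - x₁) * (a₃ * x₂) = 0 := by rw [he]; ring
          nlinarith [sq_nonneg (a₂ * x₁ - a₁ * x₂ - a₃)]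
        have hlt : a₁ < x₁ := lt_of_le_of_ne hc fun he => hne (by rw [he]; ring)
        nlinarith [sq_nonneg (a₂ * x₁ - a₁ * x₂ - a₃),
          mul_pos (sub_pos.mpr hlt) (mul_pos h3 hx2)]
    · by_contra hc
      push_neg at hc
      rcases le_or_gt x₁ a₁ with hx1 | hx1
      · rcases eq_or_lt_of_le hx1 with he | hlt
        · exact hard x₁ x₂ he.ge hc h
        · nlinarith [sq_nonneg (a₂ * x₁ - a₁ * x₂ - a₃),
            mul_nonneg (mul_nonneg (sub_pos.mpr hlt).le h3.le) (neg_nonneg.mpr hc)]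
      · exact hard x₁ x₂ hx1.le hc h
end

section
/- Let a(s) = s³ + a₁s² + a₂s + a₃ be a Hurwitz stable monic real cubic and suppose x₁ > 0, x₂ > 0 satisfy (a₂x₁ - a₁x₂ - a₃)² - 4(a₁ - x₁)(a₃x₂) < 0. Then for c(s) = s² + x₁ s + x₂, we have Re[c(jω)/a(jω)] > 0 for all real ω. -/
open Polynomial Complex

lemma evalI_quad (x₁ x₂ ω : ℝ) :
    evalI (Polynomial.X ^ 2 + Polynomial.C x₁ * Polynomial.X + Polynomial.C x₂) ω
      = ⟨x₂ - ω^2, x₁ * ω⟩ := by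
  simp [evalI, Complex.ext_iff, pow_succ, Complex.mul_re, Complex.mul_im]
  ring_nf

lemma evalI_cubic (a₁ a₂ a₃ ω : ℝ) :
    evalI (Polynomial.X ^ 3 + Polynomial.C a₁ * Polynomial.X ^ 2 +
          Polynomial.C a₂ * Polynomial.X + Polynomial.C a₃) ω
      = ⟨a₃ - a₁*ω^2, a₂*ω - ω^3⟩ := by
  simp [evalI, Complex.ext_iff, pow_succ, Complex.mul_re, Complex.mul_im]
  ring_nf
  try simp

theorem cubic_re_pos (a₁ a₂ a₃ x₁ x₂ : ℝ)
    (h1 : 0 < a₁) (h2 : 0 < a₂) (h3 : 0 < a₃) (h4 : a₃ < a₁ * a₂)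
    (hx₁ : 0 < x₁) (hx₂ : 0 < x₂)
    (hdisc : (a₂ * x₁ - a₁ * x₂ - a₃) ^ 2 - 4 * (a₁ - x₁) * (a₃ * x₂) < 0) :
    ∀ ω : ℝ,
      0 < (evalI (Polynomial.X ^ 2 + Polynomial.C x₁ * Polynomial.X + Polynomial.C x₂) ω /
        evalI (Polynomial.X ^ 3 + Polynomial.C a₁ * Polynomial.X ^ 2 +
          Polynomial.C a₂ * Polynomial.X + Polynomial.C a₃) ω).re := by
  intro ω
  have hA : 0 < a₁ - x₁ := by
    nlinarith [sq_nonneg (a₂ * x₁ - a₁ * x₂ - a₃), mul_pos h3 hx₂]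
  rw [evalI_quad, evalI_cubic, Complex.div_re]
  have hden : 0 < Complex.normSq ⟨a₃ - a₁*ω^2, a₂*ω - ω^3⟩ := by
    rw [Complex.normSq_mk]
    rcases eq_or_ne ω 0 with h | h
    · subst h; simpa using mul_pos h3 h3
    · rcases eq_or_ne (a₂*ω - ω^3) 0 with hz | hz
      · have hmul : ω * (a₂ - ω^2) = 0 := by ring_nf; linarith [hz]
        have h2' : a₂ - ω^2 = 0 := by
          rcases mul_eq_zero.mp hmul with h' | h'
          · exact absurd h' h
          · exact h'
        have : ω^2 = a₂ := by linarith
        rw [this, hz]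
        nlinarith
      · nlinarith [mul_self_pos.mpr hz, mul_self_nonneg (a₃ - a₁*ω^2)]
  have hnum : 0 < (x₂ - ω^2) * (a₃ - a₁*ω^2) + (x₁*ω) * (a₂*ω - ω^3) := by
    nlinarith [sq_nonneg (2*(a₁-x₁)*ω^2 + (a₂*x₁ - a₁*x₂ - a₃)), sq_nonneg ω]
  have key := div_pos hnum hden
  rw [add_div] at key
  convert key using 2 <;> ring
end

section
/- Let a(s) = s³ + a₁s² + a₂s + a₃ be Hurwitz stable and let u₁ > 0, u₂ > 0 satisfy u₁u₂ - a₁u₂ - a₂u₁ + a₃ = 0. Then the line L = {(x₁, x₂) : x₁/u₁ + x₂/u₂ = 1} is tangent to the ellipse E = {(x₁, x₂) : (a₂x₁ - a₁x₂ - a₃)² - 4(a₁ - x₁)(a₃x₂) = 0}: substituting x₁ = u₁(1 - x₂/u₂) into (a₂x₁ - a₁x₂ - a₃)² - 4(a₁ - x₁)a₃x₂ yields a quadratic in x₂ with zero discriminant. -/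
theorem line_tangent_to_ellipse (a₁ a₂ a₃ u₁ u₂ : ℝ)
    (h1 : 0 < a₁) (h2 : 0 < a₂) (h3 : 0 < a₃) (h4 : a₃ < a₁ * a₂)
    (hu₁ : 0 < u₁) (hu₂ : 0 < u₂)
    (htan : u₁ * u₂ - a₁ * u₂ - a₂ * u₁ + a₃ = 0) :
    ∃ A B C : ℝ,
      (∀ t : ℝ,
        (a₂ * (u₁ * (1 - t)) - a₁ * (u₂ * t) - a₃) ^ 2 -
            4 * (a₁ - u₁ * (1 - t)) * (a₃ * (u₂ * t)) =
          A * t ^ 2 + B * t + C) ∧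
      B ^ 2 - 4 * A * C = 0 := by
  refine ⟨(a₂ * u₁ + a₁ * u₂) ^ 2 - 4 * a₃ * u₂ * u₁,
    -2 * (a₂ * u₁ - a₃) * (a₂ * u₁ + a₁ * u₂) - 4 * a₃ * u₂ * (a₁ - u₁),
    (a₂ * u₁ - a₃) ^ 2, fun t => by ring, ?_⟩
  linear_combination (16 * a₃ * u₁ * u₂ * (a₃ - a₁ * a₂)) * htan
end
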